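/- Theorem (Integral vanishing, paper Theorem 6.6). In the situation of the context: (1) gr_n M = 0 for every n ≥ r_d + 1; (2) if n is not of the form r_i + kp with 1 ≤ i ≤ d and k an integer ≥ 0, then gr_n M = 0; (3) if n is not of the form r_i + kp with 1 ≤ i ≤ d and k an integer ≥ 1, then gr_n M is torsion-free (equivalently, a free R-module). -/

import Mathlib

/-!
On `gr_n` the operator `θ` acts as `n`, so a polynomial `f(θ)` acts as `f(n)`. If
`f(j) ≠ 0` for all integers `j ≤ m`, then `f(θ)` is injective on `Fil_m`: by induction from
`Fil_{-1} = 0`, if `f(θ) y = 0` with `y ∈ Fil_m`, then `f(m) • y ∈ Fil_{m-1}` is also killed,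
hence zero, and `M` is torsion-free.

Split the annihilator `∏_v (X - v)` of `θ` as `B * A`, where `A` collects the weights `v ≤ n`
(for (2)) or `v < n` (for (3)). As `B` has no integer roots `≤ n`, resp. `< n`, `A(θ)` kills `Fil_n`,
resp. `A(θ) x = 0` as soon as `a • x ∈ Fil_{n-1}` with `a ≠ 0`; in both cases
`A(n) • x ∈ Fil_{n-1}`. The hypothesis on `n` says that no factor `n - v` of `A(n)` is
divisible by `p`, so `A(n)` is a unit of the local ring `R` and `x ∈ Fil_{n-1}`.
-/

open Submodule

noncomputable section

namespace FilSen

variable {R : Type*} [CommRing R] {M : Type*} [AddCommGroup M] [Module R M]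

/-- `gr_n M = Fil_n M / Fil_{n-1} M`. -/
abbrev grQ (Fil : ℤ → Submodule R M) (n : ℤ) :=
  ↥(Fil n) ⧸ Submodule.comap (Fil n).subtype (Fil (n - 1))

end FilSen

open FilSen Polynomial

namespace FilSen

variable {R : Type*} [CommRing R] {M : Type*} [AddCommGroup M] [Module R M]

theorem grQ_eq_zero_of_le {Fil : ℤ → Submodule R M} {n : ℤ} (h : Fil n ≤ Fil (n - 1))
    (x : grQ Fil n) : x = 0 := by
  induction x using Submodule.Quotient.induction_on with
  | _ y => exact (Submodule.Quotient.mk_eq_zero _).mpr (h y.2)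

theorem torsion_grQ_eq_bot {Fil : ℤ → Submodule R M} {n : ℤ}
    (h : ∀ a ∈ nonZeroDivisors R, ∀ x ∈ Fil n, a • x ∈ Fil (n - 1) → x ∈ Fil (n - 1)) :
    Submodule.torsion R (grQ Fil n) = ⊥ := by
  refine eq_bot_iff.mpr fun x hx => ?_
  obtain ⟨a, hax⟩ := (Submodule.mem_torsion_iff x).mp hx
  induction x using Submodule.Quotient.induction_on with
  | _ y =>
    rw [← Submodule.Quotient.mk_smul, Submodule.Quotient.mk_eq_zero] at hax
    exact (Submodule.mem_bot R).mpr ((Submodule.Quotient.mk_eq_zero _).mpr (h a a.2 y y.2 hax))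

structure IsSenFiltration (Fil : ℤ → Submodule R M) (θ : M →ₗ[R] M) : Prop where
  eq_bot_of_neg : ∀ n : ℤ, n < 0 → Fil n = ⊥
  mapsTo : ∀ n : ℤ, ∀ x ∈ Fil n, θ x ∈ Fil n
  sub_smul_mem : ∀ n : ℤ, ∀ x ∈ Fil n, θ x - (n : R) • x ∈ Fil (n - 1)

namespace IsSenFiltration

variable {Fil : ℤ → Submodule R M} {θ : M →ₗ[R] M}

theorem aeval_apply_mem (hθ : IsSenFiltration Fil θ) (f : R[X]) {n : ℤ} {x : M}
    (hx : x ∈ Fil n) : aeval θ f x ∈ Fil n :=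
  aeval_apply_smul_mem_of_le_comap hx f θ fun y hy => hθ.mapsTo n y hy

theorem aeval_apply_sub_eval_smul_mem (hθ : IsSenFiltration Fil θ) (f : R[X]) {n : ℤ} {x : M}
    (hx : x ∈ Fil n) : aeval θ f x - f.eval (n : R) • x ∈ Fil (n - 1) := by
  induction f using Polynomial.induction_on with
  | C a => simp
  | add f g hf hg =>
    simpa only [map_add, LinearMap.add_apply, eval_add, add_smul, add_sub_add_comm]
      using add_mem hf hg
  | monomial k a ih =>
    set y := aeval θ (C a * X ^ k) x
    have hy : y ∈ Fil n := hθ.aeval_apply_mem _ hx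
    have key : aeval θ (C a * X ^ (k + 1)) x - (C a * X ^ (k + 1)).eval (n : R) • x =
        (θ y - (n : R) • y) + (n : R) • (y - (C a * X ^ k).eval (n : R) • x) := by
      rw [pow_succ', mul_left_comm, map_mul, aeval_X, Module.End.mul_apply, eval_mul, eval_X,
        mul_smul, smul_sub]
      abel
    rw [key]
    exact add_mem (hθ.sub_smul_mem n y hy) (smul_mem _ _ ih)

theorem eval_smul_mem_of_aeval_apply_eq_zero (hθ : IsSenFiltration Fil θ) {f : R[X]} {n : ℤ}
    {x : M} (hx : x ∈ Fil n) (hfx : aeval θ f x = 0) : f.eval (n : R) • x ∈ Fil (n - 1) := by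
  simpa [hfx] using hθ.aeval_apply_sub_eval_smul_mem f hx

theorem eq_zero_of_aeval_apply_eq_zero [IsDomain R] [Module.IsTorsionFree R M]
    (hθ : IsSenFiltration Fil θ) {f : R[X]} {m : ℤ} (hf : ∀ j : ℤ, j ≤ m → f.eval (j : R) ≠ 0)
    {x : M} (hx : x ∈ Fil m) (hfx : aeval θ f x = 0) : x = 0 := by
  obtain hlt | hm := lt_or_ge m (-1)
  · simpa [hθ.eq_bot_of_neg m (by omega)] using hx
  induction m, hm using Int.leInduction generalizing x with
  | base => simpa [hθ.eq_bot_of_neg (-1) (by norm_num)] using hx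
  | succ m _ ih =>
    have hfm : f.eval ((m + 1 : ℤ) : R) ≠ 0 := hf _ le_rfl
    have hlower := hθ.eval_smul_mem_of_aeval_apply_eq_zero hx hfx
    rw [add_sub_cancel_right] at hlower
    have hkilled : aeval θ f (f.eval ((m + 1 : ℤ) : R) • x) = 0 := by
      rw [map_smul, hfx, smul_zero]
    have h0 := ih (fun j hj => hf j (by omega)) hlower hkilled
    exact (smul_eq_zero.mp h0).resolve_left hfm

theorem mem_pred_of_aeval_apply_eq_zero (hθ : IsSenFiltration Fil θ) {f : R[X]} {n : ℤ}
    (hf : IsUnit (f.eval (n : R))) {x : M} (hx : x ∈ Fil n) (hfx : aeval θ f x = 0) :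
    x ∈ Fil (n - 1) :=
  (smul_mem_iff_of_isUnit _ hf).mp (hθ.eval_smul_mem_of_aeval_apply_eq_zero hx hfx)

variable [IsDomain R] [Module.IsTorsionFree R M]

theorem le_pred_of_aeval_mul_eq_zero (hθ : IsSenFiltration Fil θ) {A B : R[X]}
    (hBA : aeval θ (B * A) = 0) {n : ℤ} (hA : IsUnit (A.eval (n : R)))
    (hB : ∀ j : ℤ, j ≤ n → B.eval (j : R) ≠ 0) : Fil n ≤ Fil (n - 1) := by
  intro x hx
  have hkilled : aeval θ B (aeval θ A x) = 0 := by
    rw [← Module.End.mul_apply, ← map_mul, hBA, LinearMap.zero_apply]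
  exact hθ.mem_pred_of_aeval_apply_eq_zero hA hx
    (hθ.eq_zero_of_aeval_apply_eq_zero hB (hθ.aeval_apply_mem A hx) hkilled)

theorem mem_pred_of_smul_mem (hθ : IsSenFiltration Fil θ) {A B : R[X]}
    (hBA : aeval θ (B * A) = 0) {n : ℤ} (hA : IsUnit (A.eval (n : R)))
    (hB : ∀ j : ℤ, j < n → B.eval (j : R) ≠ 0) {a : R} (ha : a ≠ 0) {x : M} (hx : x ∈ Fil n)
    (hax : a • x ∈ Fil (n - 1)) : x ∈ Fil (n - 1) := by
  set z := aeval θ A x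
  have haz : a • z ∈ Fil (n - 1) := by
    have := add_mem (smul_mem _ a (hθ.aeval_apply_sub_eval_smul_mem A hx))
      (smul_mem _ (A.eval (n : R)) hax)
    rwa [smul_sub, smul_comm a, sub_add_cancel] at this
  have hkilled : aeval θ B (a • z) = 0 := by
    rw [map_smul, ← Module.End.mul_apply, ← map_mul, hBA, LinearMap.zero_apply, smul_zero]
  have haz0 : a • z = 0 :=
    hθ.eq_zero_of_aeval_apply_eq_zero (m := n - 1) (fun j hj => hB j (by omega)) haz hkilled
  exact hθ.mem_pred_of_aeval_apply_eq_zero hA hx ((smul_eq_zero.mp haz0).resolve_left ha)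

end IsSenFiltration

theorem eval_prod_X_sub_C_natCast_ne_zero [IsDomain R] [CharZero R] {T : Finset ℕ} {j : ℤ}
    (h : ∀ v ∈ T, j ≠ v) : (∏ v ∈ T, (X - C (v : R))).eval (j : R) ≠ 0 := by
  rw [eval_prod, Finset.prod_ne_zero_iff]
  intro v hv
  rw [eval_sub, eval_X, eval_C, sub_ne_zero]
  exact_mod_cast h v hv

theorem isUnit_intCast_of_not_dvd [IsLocalRing R] {p : ℕ} (hp : p.Prime) (hpR : ¬IsUnit (p : R))
    {m : ℤ} (hm : ¬(p : ℤ) ∣ m) : IsUnit (m : R) := by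
  obtain ⟨a, b, hab⟩ :=
    ((Nat.prime_iff_prime_int.mp hp).coprime_iff_not_dvd.mpr hm).intCast (R := R)
  rcases IsLocalRing.isUnit_or_isUnit_of_isUnit_add (hab ▸ isUnit_one) with h | h
  · exact absurd (isUnit_of_mul_isUnit_right h) (by exact_mod_cast hpR)
  · exact isUnit_of_mul_isUnit_right h

theorem exists_eq_add_mul_of_dvd_sub {p : ℕ} (hp : 0 < p) {v n : ℤ} (hvn : v ≤ n)
    (h : (p : ℤ) ∣ n - v) : ∃ k : ℕ, n = v + k * p := by
  obtain ⟨c, hc⟩ := h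
  lift c to ℕ using by nlinarith
  exact ⟨c, by linarith⟩

theorem isUnit_eval_prod_X_sub_C_natCast [IsLocalRing R] {p : ℕ} (hp : p.Prime)
    (hpR : ¬IsUnit (p : R)) {T : Finset ℕ} {n : ℤ} (hT : ∀ v ∈ T, (v : ℤ) ≤ n)
    (h : ∀ v ∈ T, ∀ k : ℕ, n ≠ v + k * p) :
    IsUnit ((∏ v ∈ T, (X - C (v : R))).eval (n : R)) := by
  rw [eval_prod]
  refine Finset.prod_induction _ IsUnit (fun _ _ => IsUnit.mul) isUnit_one fun v hv => ?_
  have hndvd : ¬(p : ℤ) ∣ n - v := fun hdvd =>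
    (exists_eq_add_mul_of_dvd_sub hp.pos (hT v hv) hdvd).elim (h v hv)
  simpa using isUnit_intCast_of_not_dvd hp hpR hndvd

end FilSen

theorem integral_vanishing_general
    {R : Type*} [CommRing R] [IsDomain R] [IsDiscreteValuationRing R] [CharZero R]
    (p : ℕ) [Fact p.Prime] (hp : Irreducible (p : R))
    {M : Type*} [AddCommGroup M] [Module R M] [Module.Free R M]
    (d : ℕ)
    (r : Fin d → ℕ)
    (Fil : ℤ → Submodule R M)
    (hbot : ∀ n : ℤ, n < 0 → Fil n = ⊥)
    (htop : ∀ n : ℤ, ((Finset.univ.sup r : ℕ) : ℤ) ≤ n → Fil n = ⊤)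
    (θ : M →ₗ[R] M)
    (hstab : ∀ n : ℤ, ∀ x ∈ Fil n, θ x ∈ Fil n)
    (hGT : ∀ n : ℤ, ∀ x ∈ Fil n, θ x - (n : R) • x ∈ Fil (n - 1))
    (hdiag : Polynomial.aeval θ (∏ v ∈ Finset.image r Finset.univ,
        (Polynomial.X - Polynomial.C ((v : R)))) = 0) :
    -- (1) `gr_n M = 0` for `n ≥ r_d + 1`
    (∀ n : ℤ, ((Finset.univ.sup r : ℕ) : ℤ) + 1 ≤ n → ∀ x : grQ Fil n, x = 0) ∧
    -- (2) if `n` is not of the form `r_i + k·p`, `k ≥ 0`, then `gr_n M = 0`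
    (∀ n : ℤ, (¬ ∃ (i : Fin d) (k : ℕ), n = (r i : ℤ) + (k : ℤ) * (p : ℤ)) →
      ∀ x : grQ Fil n, x = 0) ∧
    -- (3) if `n` is not of the form `r_i + k·p`, `k ≥ 1`, then `gr_n M` is
    -- torsion-free
    (∀ n : ℤ, (¬ ∃ (i : Fin d) (k : ℕ), 1 ≤ k ∧ n = (r i : ℤ) + (k : ℤ) * (p : ℤ)) →
      Submodule.torsion R (grQ Fil n) = ⊥) := by
  classical
  have hθ : IsSenFiltration Fil θ := ⟨hbot, hstab, hGT⟩
  have hsplit (q : ℕ → Prop) [DecidablePred q] :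
      aeval θ ((∏ v ∈ Finset.univ.image r with ¬q v, (X - C (v : R))) *
        ∏ v ∈ Finset.univ.image r with q v, (X - C (v : R))) = 0 := by
    rwa [Finset.prod_filter_not_mul_prod_filter]
  refine ⟨fun n hn => grQ_eq_zero_of_le ?_, fun n hn => grQ_eq_zero_of_le ?_,
    fun n hn => torsion_grQ_eq_bot fun a ha x hx hax => ?_⟩
  · simp [htop (n - 1) (by omega)]
  · refine hθ.le_pred_of_aeval_mul_eq_zero (hsplit fun v => (v : ℤ) ≤ n)
      (isUnit_eval_prod_X_sub_C_natCast Fact.out hp.not_isUnit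
        (fun v hv => (Finset.mem_filter.mp hv).2) fun v hv k hk => ?_)
      fun j hj => eval_prod_X_sub_C_natCast_ne_zero fun v hv => by
        have := (Finset.mem_filter.mp hv).2; omega
    obtain ⟨i, -, rfl⟩ := Finset.mem_image.mp (Finset.mem_filter.mp hv).1
    exact hn ⟨i, k, hk⟩
  · refine hθ.mem_pred_of_smul_mem (hsplit fun v => (v : ℤ) < n)
      (isUnit_eval_prod_X_sub_C_natCast Fact.out hp.not_isUnit
        (fun v hv => (Finset.mem_filter.mp hv).2.le) fun v hv k hk => ?_)
      (fun j hj => eval_prod_X_sub_C_natCast_ne_zero fun v hv => by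
        have := (Finset.mem_filter.mp hv).2; omega)
      (nonZeroDivisors.ne_zero ha) hx hax
    obtain ⟨i, -, rfl⟩ := Finset.mem_image.mp (Finset.mem_filter.mp hv).1
    refine hn ⟨i, k, Nat.one_le_iff_ne_zero.mpr fun hk0 => ?_, hk⟩
    have hvn := (Finset.mem_filter.mp hv).2
    simp only [hk0, Nat.cast_zero, zero_mul, add_zero] at hk
    omega

theorem integral_vanishing
    {R : Type*} [CommRing R] [IsDomain R] [IsDiscreteValuationRing R] [CharZero R]
    (p : ℕ) [Fact p.Prime] (hp : Irreducible (p : R))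
    {M : Type*} [AddCommGroup M] [Module R M] [Module.Free R M] [Module.Finite R M]
    (d : ℕ) (hd : 0 < d) (hrank : Module.finrank R M = d)
    (r : Fin d → ℕ) (hr : Monotone r)
    (Fil : ℤ → Submodule R M) (hmono : Monotone Fil)
    (hbot : ∀ n : ℤ, n < 0 → Fil n = ⊥)
    (htop : ∀ n : ℤ, ((Finset.univ.sup r : ℕ) : ℤ) ≤ n → Fil n = ⊤)
    (θ : M →ₗ[R] M)
    (hstab : ∀ n : ℤ, ∀ x ∈ Fil n, θ x ∈ Fil n)
    (hGT : ∀ n : ℤ, ∀ x ∈ Fil n, θ x - (n : R) • x ∈ Fil (n - 1))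
    (hchar : LinearMap.charpoly θ = ∏ i : Fin d, (Polynomial.X - Polynomial.C ((r i : R))))
    (hdiag : Polynomial.aeval θ (∏ v ∈ Finset.image r Finset.univ,
        (Polynomial.X - Polynomial.C ((v : R)))) = 0) :
    -- (1) `gr_n M = 0` for `n ≥ r_d + 1`
    (∀ n : ℤ, ((Finset.univ.sup r : ℕ) : ℤ) + 1 ≤ n → ∀ x : grQ Fil n, x = 0) ∧
    -- (2) if `n` is not of the form `r_i + k·p`, `k ≥ 0`, then `gr_n M = 0`
    (∀ n : ℤ, (¬ ∃ (i : Fin d) (k : ℕ), n = (r i : ℤ) + (k : ℤ) * (p : ℤ)) →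
      ∀ x : grQ Fil n, x = 0) ∧
    -- (3) if `n` is not of the form `r_i + k·p`, `k ≥ 1`, then `gr_n M` is
    -- torsion-free
    (∀ n : ℤ, (¬ ∃ (i : Fin d) (k : ℕ), 1 ≤ k ∧ n = (r i : ℤ) + (k : ℤ) * (p : ℤ)) →
      Submodule.torsion R (grQ Fil n) = ⊥) :=
  integral_vanishing_general p hp d r Fil hbot htop θ hstab hGT hdiag
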